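/- Let 𝕜 be an RCLike field (ℝ or ℂ) and let t be a quantum-logic term in n variables. If there exists an assignment X : Fin n → Submodule 𝕜 (EuclideanSpace 𝕜 (Fin d)) with eval t X = ⊤, and there exists an assignment Y : Fin n → Submodule 𝕜 (EuclideanSpace 𝕜 (Fin e)) with eval t Y = ⊤, then there exists an assignment Z : Fin n → Submodule 𝕜 (EuclideanSpace 𝕜 (Fin (d + e))) with eval t Z = ⊤. -/

import Mathlib

/-- A quantum-logic term in `n` variables. -/
inductive Term (n : ℕ) : Type
  | var : Fin n → Term n
  | neg : Term n → Term n
  | inf : Term n → Term n → Term n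
  | sup : Term n → Term n → Term n

/-- The value of a quantum-logic term under an assignment of subspaces
to the variables.  Negation is interpreted as orthogonal complement. -/
def Term.eval {n : ℕ} {𝕜 E : Type*} [RCLike 𝕜] [NormedAddCommGroup E]
    [InnerProductSpace 𝕜 E] : Term n → (Fin n → Submodule 𝕜 E) → Submodule 𝕜 E
  | .var i, U => U i
  | .neg t, U => (t.eval U)ᗮ
  | .inf s t, U => s.eval U ⊓ t.eval U
  | .sup s t, U => s.eval U ⊔ t.eval U

/-!
Pair the two satisfying assignments componentwise into `WithLp 2 (𝕜^d × 𝕜^e)`. Taking products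
of subspaces commutes with `⊓`, `⊔` and (because the two factors are orthogonal) with `ᗮ`, so `t`
evaluates to `⊤ × ⊤ = ⊤`. Evaluation commutes with isometric isomorphisms, and
`WithLp 2 (𝕜^d × 𝕜^e) ≃ₗᵢ 𝕜^(d+e)`.
-/

open Submodule

namespace Submodule

variable {𝕜 E F : Type*} [RCLike 𝕜] [NormedAddCommGroup E] [InnerProductSpace 𝕜 E]
  [NormedAddCommGroup F] [InnerProductSpace 𝕜 F]

def prodL2 (K : Submodule 𝕜 E) (L : Submodule 𝕜 F) : Submodule 𝕜 (WithLp 2 (E × F)) :=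
  (K.prod L).comap (WithLp.linearEquiv 2 𝕜 (E × F)).toLinearMap

lemma mem_prodL2 {K : Submodule 𝕜 E} {L : Submodule 𝕜 F} {x : WithLp 2 (E × F)} :
    x ∈ prodL2 K L ↔ x.ofLp.1 ∈ K ∧ x.ofLp.2 ∈ L := Iff.rfl

lemma prodL2_top : prodL2 (⊤ : Submodule 𝕜 E) (⊤ : Submodule 𝕜 F) = ⊤ := by
  ext x; simp [mem_prodL2]

lemma prodL2_inf_prodL2 (K K' : Submodule 𝕜 E) (L L' : Submodule 𝕜 F) :
    prodL2 K L ⊓ prodL2 K' L' = prodL2 (K ⊓ K') (L ⊓ L') := by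
  rw [prodL2, prodL2, ← comap_inf, prod_inf_prod, prodL2]

lemma prodL2_sup_prodL2 (K K' : Submodule 𝕜 E) (L L' : Submodule 𝕜 F) :
    prodL2 K L ⊔ prodL2 K' L' = prodL2 (K ⊔ K') (L ⊔ L') := by
  simp only [prodL2, comap_equiv_eq_map_symm, ← map_sup, prod_sup_prod]

lemma orthogonal_prodL2 (K : Submodule 𝕜 E) (L : Submodule 𝕜 F) :
    (prodL2 K L)ᗮ = prodL2 Kᗮ Lᗮ := by
  ext x
  simp only [mem_prodL2, mem_orthogonal]
  constructor
  · intro hx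
    refine ⟨fun u hu => ?_, fun v hv => ?_⟩
    · simpa [WithLp.prod_inner_apply] using hx (WithLp.toLp 2 (u, 0)) (by simp [hu])
    · simpa [WithLp.prod_inner_apply] using hx (WithLp.toLp 2 (0, v)) (by simp [hv])
  · rintro ⟨hK, hL⟩ y ⟨hy₁, hy₂⟩
    rw [WithLp.prod_inner_apply, hK _ hy₁, hL _ hy₂, add_zero]

end Submodule

namespace Term

variable {n : ℕ} {𝕜 E F : Type*} [RCLike 𝕜] [NormedAddCommGroup E] [InnerProductSpace 𝕜 E]
  [NormedAddCommGroup F] [InnerProductSpace 𝕜 F]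

lemma eval_prodL2 (t : Term n) (X : Fin n → Submodule 𝕜 E) (Y : Fin n → Submodule 𝕜 F) :
    t.eval (fun i => prodL2 (X i) (Y i)) = prodL2 (t.eval X) (t.eval Y) := by
  induction t with
  | var i => rfl
  | neg t ih => simp only [eval, ih, orthogonal_prodL2]
  | inf s t ihs iht => simp only [eval, ihs, iht, prodL2_inf_prodL2]
  | sup s t ihs iht => simp only [eval, ihs, iht, prodL2_sup_prodL2]

lemma eval_map_linearIsometryEquiv (f : E ≃ₗᵢ[𝕜] F) (t : Term n) (U : Fin n → Submodule 𝕜 E) :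
    t.eval (fun i => (U i).map f.toLinearEquiv.toLinearMap)
      = (t.eval U).map f.toLinearEquiv.toLinearMap := by
  induction t with
  | var i => rfl
  | neg t ih => simp only [eval, ih, map_orthogonal_equiv]
  | inf s t ihs iht => simp only [eval, ihs, iht, map_inf _ f.injective]
  | sup s t ihs iht => simp only [eval, ihs, iht, Submodule.map_sup]

end Term

theorem satisfiable_add_dimensions {n d e : ℕ} {𝕜 : Type*} [RCLike 𝕜]
    (t : Term n)
    (hd : ∃ X : Fin n → Submodule 𝕜 (EuclideanSpace 𝕜 (Fin d)), t.eval X = ⊤)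
    (he : ∃ Y : Fin n → Submodule 𝕜 (EuclideanSpace 𝕜 (Fin e)), t.eval Y = ⊤) :
    ∃ Z : Fin n → Submodule 𝕜 (EuclideanSpace 𝕜 (Fin (d + e))), t.eval Z = ⊤ := by
  obtain ⟨X, hX⟩ := hd
  obtain ⟨Y, hY⟩ := he
  let f : WithLp 2 (EuclideanSpace 𝕜 (Fin d) × EuclideanSpace 𝕜 (Fin e))
      ≃ₗᵢ[𝕜] EuclideanSpace 𝕜 (Fin (d + e)) :=
    (PiLp.sumPiLpEquivProdLpPiLp 2 fun _ => 𝕜).symm.trans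
      (LinearIsometryEquiv.piLpCongrLeft 2 𝕜 𝕜 finSumFinEquiv)
  refine ⟨fun i => (prodL2 (X i) (Y i)).map f.toLinearEquiv.toLinearMap, ?_⟩
  rw [t.eval_map_linearIsometryEquiv, t.eval_prodL2, hX, hY, prodL2_top, Submodule.map_top,
    LinearEquiv.range]
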